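/- Let n ≥ 1 and m be integers with n ≤ 3m+5 and n ≡ m+1 (mod 2). Then N⁰(m,n) = p((n−m−1)/2). -/

import Mathlib

/-- An odd Durfee symbol of `n`: a subscript `D` together with two nonincreasing
sequences of odd positive integers, each entry at most `2D+1`, whose total weight
together with `2D²+2D+1` equals `n`. -/
structure OddDurfeeSymbol (n : ℕ) where
  D : ℕ
  top : List ℕ
  bot : List ℕ
  top_sorted : top.Pairwise (· ≥ ·)
  bot_sorted : bot.Pairwise (· ≥ ·)
  top_odd : ∀ x ∈ top, Odd x
  bot_odd : ∀ x ∈ bot, Odd x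
  top_le : ∀ x ∈ top, x ≤ 2 * D + 1
  bot_le : ∀ x ∈ bot, x ≤ 2 * D + 1
  sum_eq : top.sum + bot.sum + 2 * D ^ 2 + 2 * D + 1 = n

/-- The odd rank of an odd Durfee symbol: the number of entries in the top row
minus the number of entries in the bottom row. -/
def oddRank {n : ℕ} (σ : OddDurfeeSymbol n) : ℤ :=
  (σ.top.length : ℤ) - (σ.bot.length : ℤ)

/-- `N⁰(m,n)`: the number of odd Durfee symbols of `n` with odd rank `m`. -/
noncomputable def N0 (m : ℤ) (n : ℕ) : ℕ :=
  Nat.card {σ : OddDurfeeSymbol n // oddRank σ = m}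

/-- `N⁰(a,M;n)`: the number of odd Durfee symbols of `n` with odd rank congruent
to `a` modulo `M`. -/
noncomputable def N0mod (a : ℤ) (M : ℕ) (n : ℕ) : ℕ :=
  Nat.card {σ : OddDurfeeSymbol n // oddRank σ ≡ a [ZMOD (M : ℤ)]}

/-- `p(j)`: the number of partitions of `j`, with `p(0) = 1` and `p(j) = 0` for `j < 0`. -/
noncomputable def partitionCountZ (j : ℤ) : ℕ :=
  if 0 ≤ j then Nat.card (Nat.Partition j.toNat) else 0

/-!
Write the top row of an odd Durfee symbol `(D, top, bot)` as `2α + 1` and the bottom row as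
`2β - 1`: `α` is a partition with `s = #top` parts (zeros allowed) at most `D`, and `β` one with
`t = #bot` parts in `[1, D + 1]`. Put the conjugate of `α`, which has `D` parts (zeros allowed) at
most `s`, to the right of a `D × (D + 1)` rectangle and `β` below it. This is a partition of
`N = D(D + 1) + |α| + |β|`, and `n = 2N + s - t + 1`. Conversely, `D` is recovered as the side of
the largest `D × (D + 1)` rectangle in a partition of `N`, and the rank forces `s = m + t`. For
this to be a symbol, the parts right of the rectangle must be at most `m + t`: each is at most
`N - D(D + 1) - t`, so `N ≤ m + 2`, i.e. `n ≤ 3m + 5`, suffices (with `n ≥ 1` for `s ≥ 0`).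
-/

namespace List

theorem map_map_eq_self {α β : Type*} {l : List α} {f : α → β} {g : β → α}
    (h : ∀ x ∈ l, g (f x) = x) : (l.map f).map g = l := by
  rw [map_map]
  exact (map_congr_left h).trans (map_id l)

theorem sum_map_add_length_mul {α : Type*} {l : List α} {f g : α → ℕ} {c : ℕ}
    (h : ∀ x ∈ l, f x + c = g x) : (l.map f).sum + l.length * c = (l.map g).sum := by
  rw [← map_congr_left h, sum_map_add, map_const', sum_replicate, smul_eq_mul]

theorem sum_map_two_mul_add_one (l : List ℕ) :
    (l.map (2 * · + 1)).sum = 2 * l.sum + l.length := by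
  rw [← sum_map_add_length_mul (f := (2 * ·)) fun _ _ => rfl, sum_map_mul_left, map_id', mul_one]

theorem sum_map_two_mul_sub_one {l : List ℕ} (hl : ∀ x ∈ l, 0 < x) :
    (l.map (2 * · - 1)).sum + l.length = 2 * l.sum := by
  rw [← mul_one l.length, sum_map_add_length_mul (g := (2 * ·)) fun x hx => by
    have := hl x hx; omega, sum_map_mul_left, map_id']

theorem map_two_mul_add_one_map_div_two {l : List ℕ} (hl : ∀ x ∈ l, Odd x) :
    (l.map (· / 2)).map (2 * · + 1) = l :=
  map_map_eq_self fun x hx => Nat.two_mul_div_two_add_one_of_odd (hl x hx)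

theorem map_two_mul_sub_one_map_div_two_add_one {l : List ℕ} (hl : ∀ x ∈ l, Odd x) :
    (l.map (· / 2 + 1)).map (2 * · - 1) = l :=
  map_map_eq_self fun x hx => by have := Nat.two_mul_div_two_add_one_of_odd (hl x hx); omega

theorem countP_range_lt (a h : ℕ) : (range h).countP (· < a) = min a h := by
  induction h with
  | zero => simp
  | succ h ih =>
    rw [range_succ, countP_append, ih]
    simp only [countP_singleton, decide_eq_true_eq]
    split_ifs <;> omega

theorem sum_map_range_ite_lt (a h : ℕ) :
    ((range h).map fun i => if i < a then 1 else 0).sum = min a h := by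
  induction h with
  | zero => simp
  | succ h ih =>
    rw [range_succ, map_append, sum_append, ih]
    simp only [map_cons, map_nil, sum_singleton]
    split_ifs <;> omega

theorem lt_countP_iff_lt_getElem {L : List ℕ} (hL : L.Pairwise (· ≥ ·)) {i j : ℕ}
    (hj : j < L.length) : j < L.countP (i < ·) ↔ i < L[j] := by
  induction L generalizing j with
  | nil => simp at hj
  | cons a L ih =>
    have hrest (hia : ¬ i < a) : L.countP (i < ·) = 0 :=
      countP_eq_zero.2 fun x hx => by simpa using (rel_of_pairwise_cons hL hx).trans (not_lt.1 hia)
    rw [countP_cons]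
    cases j with
    | zero => by_cases hia : i < a <;> simp [hia, hrest]
    | succ j =>
      have hj' : j < L.length := by simpa using hj
      by_cases hia : i < a
      · simp [hia, ← ih hL.of_cons hj']
      · have := rel_of_pairwise_cons hL (getElem_mem hj')
        simp [hia, hrest hia]
        omega

/-- The first `h` parts of the conjugate of the partition `L`, padded with zeros. -/
def conjugate (L : List ℕ) (h : ℕ) : List ℕ :=
  (range h).map fun i => L.countP (i < ·)

@[simp]
theorem length_conjugate (L : List ℕ) (h : ℕ) : (L.conjugate h).length = h := by
  simp [conjugate]

theorem pairwise_conjugate (L : List ℕ) (h : ℕ) : (L.conjugate h).Pairwise (· ≥ ·) :=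
  pairwise_lt_range.map _ fun _ _ hij =>
    countP_mono_left fun _ _ hx => by simp only [decide_eq_true_eq] at *; omega

theorem le_length_of_mem_conjugate {L : List ℕ} {h x : ℕ} (hx : x ∈ L.conjugate h) :
    x ≤ L.length := by
  obtain ⟨i, -, rfl⟩ := mem_map.1 hx
  exact countP_le_length

theorem sum_conjugate {L : List ℕ} {h : ℕ} (hL : ∀ x ∈ L, x ≤ h) :
    (L.conjugate h).sum = L.sum := by
  induction L with
  | nil => simp [conjugate]
  | cons a L ih =>
    simp only [conjugate, countP_cons, decide_eq_true_eq, sum_map_add, sum_map_range_ite_lt,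
      sum_cons] at ih ⊢
    rw [ih fun x hx => hL x (mem_cons_of_mem _ hx), min_eq_left (hL a mem_cons_self), add_comm]

theorem conjugate_conjugate {L : List ℕ} {h : ℕ} (hL : L.Pairwise (· ≥ ·))
    (hh : ∀ x ∈ L, x ≤ h) : (L.conjugate h).conjugate L.length = L := by
  refine ext_getElem (by simp) fun j hj hj' => ?_
  simp only [conjugate, getElem_map, getElem_range, countP_map]
  rw [countP_congr fun i _ => ?_, countP_range_lt, min_eq_left (hh _ (getElem_mem hj'))]
  simpa using lt_countP_iff_lt_getElem hL hj'

/-- Side of the largest `D × (D + 1)` rectangle fitting in the Young diagram of `L`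
(when `L` is sorted). -/
def durfeeRect (L : List ℕ) : ℕ :=
  Nat.findGreatest (fun D => ∀ x ∈ L.take D, D + 1 ≤ x) L.length

def durfeeArm (L : List ℕ) : List ℕ :=
  (L.take L.durfeeRect).map (· - (L.durfeeRect + 1))

def durfeeLeg (L : List ℕ) : List ℕ :=
  L.drop L.durfeeRect

theorem durfeeRect_le_length (L : List ℕ) : L.durfeeRect ≤ L.length :=
  Nat.findGreatest_le _

theorem le_of_mem_take_durfeeRect {L : List ℕ} {x : ℕ} (hx : x ∈ L.take L.durfeeRect) :
    L.durfeeRect + 1 ≤ x :=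
  Nat.findGreatest_spec (P := fun D => ∀ x ∈ L.take D, D + 1 ≤ x) (Nat.zero_le _) (by simp) x hx

theorem le_of_mem_durfeeLeg {L : List ℕ} (hL : L.Pairwise (· ≥ ·)) {x : ℕ}
    (hx : x ∈ L.durfeeLeg) : x ≤ L.durfeeRect + 1 := by
  obtain ⟨j, hj, rfl⟩ := getElem_of_mem hx
  have hDj : L.durfeeRect + j < L.length := by simp only [durfeeLeg, length_drop] at hj; omega
  obtain ⟨_, hy, hyD⟩ : ∃ y ∈ L.take (L.durfeeRect + 1), y ≤ L.durfeeRect + 1 := by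
    simpa using Nat.findGreatest_is_greatest (P := fun D => ∀ x ∈ L.take D, D + 1 ≤ x)
      (Nat.lt_succ_self L.durfeeRect) (by omega)
  obtain ⟨i, hi, rfl⟩ := getElem_of_mem hy
  simp only [length_take] at hi
  have := sortedGE_iff_getElem_ge_getElem_of_le.1 hL.sortedGE
    (i := L.durfeeRect + j) (j := i) (hi := hDj) (hj := by omega) (by omega)
  simp only [durfeeLeg, getElem_drop, getElem_take] at this hyD ⊢
  omega

theorem durfeeRect_append {R B : List ℕ} (hR : ∀ x ∈ R, R.length + 1 ≤ x)
    (hB : ∀ x ∈ B, x ≤ R.length + 1) : (R ++ B).durfeeRect = R.length := by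
  refine Nat.findGreatest_eq_iff.2 ⟨by simp, fun _ => by simpa using hR, fun d hd hdle hall => ?_⟩
  have hB0 : 0 < B.length := by rw [length_append] at hdle; omega
  have hmem : B[0] ∈ (R ++ B).take d :=
    mem_take_iff_getElem.2 ⟨R.length, by simp; omega, by simp [getElem_append_right]⟩
  have := hall _ hmem
  have := hB _ (getElem_mem hB0)
  omega

theorem length_durfeeArm (L : List ℕ) : L.durfeeArm.length = L.durfeeRect := by
  simp [durfeeArm, durfeeRect_le_length]

theorem pairwise_durfeeArm {L : List ℕ} (hL : L.Pairwise (· ≥ ·)) :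
    L.durfeeArm.Pairwise (· ≥ ·) :=
  (hL.sublist (take_sublist _ _)).map _ fun _ _ h => Nat.sub_le_sub_right h _

theorem map_durfeeArm_add (L : List ℕ) :
    L.durfeeArm.map (· + (L.durfeeRect + 1)) = L.take L.durfeeRect :=
  map_map_eq_self fun _ hx => Nat.sub_add_cancel (le_of_mem_take_durfeeRect hx)

theorem sum_eq_durfeeArm_add_durfeeLeg (L : List ℕ) :
    L.sum = L.durfeeArm.sum + L.durfeeRect * (L.durfeeRect + 1) + L.durfeeLeg.sum := by
  rw [← sum_take_add_sum_drop L L.durfeeRect, ← map_durfeeArm_add,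
    ← sum_map_add_length_mul (f := id) (g := (· + (L.durfeeRect + 1))) fun _ _ => rfl, map_id,
    length_durfeeArm, durfeeLeg]

theorem length_durfeeLeg_le_sum {L : List ℕ} (hpos : ∀ x ∈ L, 0 < x) :
    L.durfeeLeg.length ≤ L.durfeeLeg.sum :=
  length_le_sum_of_one_le _ fun x hx => hpos x (mem_of_mem_drop hx)

theorem zero_le_add_length_durfeeLeg {L : List ℕ} {m : ℤ} (hpos : ∀ x ∈ L, 0 < x)
    (hm : (L.sum : ℤ) ≤ m + 2) (hm' : 0 ≤ 2 * (L.sum : ℤ) + m) :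
    0 ≤ m + L.durfeeLeg.length := by
  have hsum := sum_eq_durfeeArm_add_durfeeLeg L
  have hleg := length_durfeeLeg_le_sum hpos
  by_contra! h
  have hleg0 : L.durfeeLeg = [] := length_eq_zero_iff.1 (by omega)
  rw [hleg0, sum_nil, add_zero] at hsum
  have hD : L.durfeeRect = 0 := by
    by_contra hD
    have : 2 ≤ L.durfeeRect * (L.durfeeRect + 1) := by nlinarith [Nat.one_le_iff_ne_zero.2 hD]
    omega
  have harm : L.durfeeArm = [] := length_eq_zero_iff.1 (by rw [length_durfeeArm, hD])
  rw [harm, hD, sum_nil] at hsum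
  omega

theorem le_of_mem_durfeeArm {L : List ℕ} {m : ℤ} (hpos : ∀ x ∈ L, 0 < x)
    (hm : (L.sum : ℤ) ≤ m + 2) {x : ℕ} (hx : x ∈ L.durfeeArm) :
    x ≤ (m + L.durfeeLeg.length).toNat := by
  have hsum := sum_eq_durfeeArm_add_durfeeLeg L
  have hleg := length_durfeeLeg_le_sum hpos
  have hxs := le_sum_of_mem hx
  have hD : 1 ≤ L.durfeeRect := length_durfeeArm L ▸ length_pos_of_mem hx
  have : 2 ≤ L.durfeeRect * (L.durfeeRect + 1) := by nlinarith
  omega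

end List

namespace OddDurfeeSymbol

open List

variable {n : ℕ}

theorem ext {σ τ : OddDurfeeSymbol n} (hD : σ.D = τ.D) (htop : σ.top = τ.top)
    (hbot : σ.bot = τ.bot) : σ = τ := by
  cases σ; cases τ; subst hD htop hbot; rfl

theorem oddRank_lt (σ : OddDurfeeSymbol n) : oddRank σ < n := by
  have := length_le_sum_of_one_le σ.top fun x hx => (σ.top_odd x hx).pos
  have := σ.sum_eq
  unfold oddRank
  omega

theorem le_of_mem_map_top (σ : OddDurfeeSymbol n) : ∀ x ∈ σ.top.map (· / 2), x ≤ σ.D := by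
  simp only [mem_map]
  rintro _ ⟨a, ha, rfl⟩
  have := σ.top_le a ha
  omega

theorem le_of_mem_map_bot (σ : OddDurfeeSymbol n) :
    ∀ x ∈ σ.bot.map (· / 2 + 1), x ≤ σ.D + 1 := by
  simp only [mem_map]
  rintro _ ⟨b, hb, rfl⟩
  have := σ.bot_le b hb
  omega

def parts (σ : OddDurfeeSymbol n) : List ℕ :=
  ((σ.top.map (· / 2)).conjugate σ.D).map (· + (σ.D + 1)) ++ σ.bot.map (· / 2 + 1)

theorem durfeeRect_parts (σ : OddDurfeeSymbol n) : σ.parts.durfeeRect = σ.D := by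
  have := durfeeRect_append (R := ((σ.top.map (· / 2)).conjugate σ.D).map (· + (σ.D + 1)))
    (B := σ.bot.map (· / 2 + 1))
    (fun _ hx => by obtain ⟨_, -, rfl⟩ := mem_map.1 hx; simp) (by simpa using σ.le_of_mem_map_bot)
  rwa [length_map, length_conjugate] at this

theorem durfeeArm_parts (σ : OddDurfeeSymbol n) :
    σ.parts.durfeeArm = (σ.top.map (· / 2)).conjugate σ.D := by
  rw [durfeeArm, durfeeRect_parts, parts, take_left' (by simp)]
  exact map_map_eq_self fun _ _ => by omega

theorem durfeeLeg_parts (σ : OddDurfeeSymbol n) :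
    σ.parts.durfeeLeg = σ.bot.map (· / 2 + 1) := by
  rw [durfeeLeg, durfeeRect_parts, parts, drop_left' (by simp)]

theorem pairwise_parts (σ : OddDurfeeSymbol n) : σ.parts.Pairwise (· ≥ ·) := by
  refine pairwise_append.2 ⟨?_, ?_, ?_⟩
  · exact (pairwise_conjugate _ _).map _ fun _ _ h => Nat.add_le_add_right h _
  · exact σ.bot_sorted.map _ fun _ _ h => Nat.add_le_add_right (Nat.div_le_div_right h) _
  · simp only [mem_map]
    rintro _ ⟨x, -, rfl⟩ y hy
    have := σ.le_of_mem_map_bot y (mem_map.2 hy)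
    omega

theorem pos_of_mem_parts (σ : OddDurfeeSymbol n) : ∀ x ∈ σ.parts, 0 < x := by
  simp only [parts, mem_append, mem_map]
  rintro _ (⟨_, -, rfl⟩ | ⟨_, -, rfl⟩) <;> omega

theorem two_mul_sum_parts (σ : OddDurfeeSymbol n) :
    2 * (σ.parts.sum : ℤ) + oddRank σ + 1 = n := by
  have hparts := sum_eq_durfeeArm_add_durfeeLeg σ.parts
  rw [durfeeRect_parts, durfeeArm_parts, durfeeLeg_parts, sum_conjugate σ.le_of_mem_map_top]
    at hparts
  have htop := sum_map_two_mul_add_one (σ.top.map (· / 2))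
  rw [map_two_mul_add_one_map_div_two σ.top_odd, length_map] at htop
  have hbot := sum_map_two_mul_sub_one (l := σ.bot.map (· / 2 + 1)) (by simp)
  rw [map_two_mul_sub_one_map_div_two_add_one σ.bot_odd, length_map] at hbot
  have hsum := σ.sum_eq
  unfold oddRank
  rw [hparts]
  zify at htop hbot hsum
  push_cast
  linear_combination hsum - htop - hbot

def ofParts (m : ℤ) (L : List ℕ) (hL : L.Pairwise (· ≥ ·)) (hpos : ∀ x ∈ L, 0 < x)
    (hn : (n : ℤ) = 2 * L.sum + m + 1) (hn1 : 1 ≤ n) (hle : (n : ℤ) ≤ 3 * m + 5) :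
    OddDurfeeSymbol n where
  D := L.durfeeRect
  top := (L.durfeeArm.conjugate (m + L.durfeeLeg.length).toNat).map (2 * · + 1)
  bot := L.durfeeLeg.map (2 * · - 1)
  top_sorted := (pairwise_conjugate _ _).map _ fun _ _ h => by omega
  bot_sorted := (hL.sublist (drop_sublist _ _)).map _ fun _ _ h => by omega
  top_odd := by
    simp only [mem_map]
    rintro _ ⟨c, -, rfl⟩
    exact odd_two_mul_add_one c
  bot_odd := by
    simp only [mem_map]
    rintro _ ⟨d, hd, rfl⟩
    have := hpos d (mem_of_mem_drop hd)
    exact ⟨d - 1, by omega⟩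
  top_le := by
    simp only [mem_map]
    rintro _ ⟨c, hc, rfl⟩
    have := length_durfeeArm L ▸ le_length_of_mem_conjugate hc
    omega
  bot_le := by
    simp only [mem_map]
    rintro _ ⟨d, hd, rfl⟩
    have := le_of_mem_durfeeLeg hL hd
    omega
  sum_eq := by
    have hwidth := zero_le_add_length_durfeeLeg hpos (m := m) (by omega) (by omega)
    have htop := sum_map_two_mul_add_one (L.durfeeArm.conjugate (m + L.durfeeLeg.length).toNat)
    rw [length_conjugate, sum_conjugate fun x hx => le_of_mem_durfeeArm hpos (by omega) hx] at htop
    have hbot := sum_map_two_mul_sub_one (l := L.durfeeLeg) fun x hx => hpos x (mem_of_mem_drop hx)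
    have hsum := sum_eq_durfeeArm_add_durfeeLeg L
    zify at htop hbot hsum ⊢
    push_cast at hn
    rw [Int.toNat_of_nonneg hwidth] at htop
    linear_combination htop + hbot - 2 * hsum - hn

theorem oddRank_ofParts {m : ℤ} {L : List ℕ} {hL : L.Pairwise (· ≥ ·)} {hpos : ∀ x ∈ L, 0 < x}
    {hn : (n : ℤ) = 2 * L.sum + m + 1} {hn1 : 1 ≤ n} {hle : (n : ℤ) ≤ 3 * m + 5} :
    oddRank (ofParts m L hL hpos hn hn1 hle) = m := by
  have := zero_le_add_length_durfeeLeg hpos (m := m) (by omega) (by omega)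
  simp only [oddRank, ofParts, length_map, length_conjugate]
  omega

theorem parts_ofParts {m : ℤ} {L : List ℕ} {hL : L.Pairwise (· ≥ ·)} {hpos : ∀ x ∈ L, 0 < x}
    {hn : (n : ℤ) = 2 * L.sum + m + 1} {hn1 : 1 ≤ n} {hle : (n : ℤ) ≤ 3 * m + 5} :
    (ofParts m L hL hpos hn hn1 hle).parts = L := by
  have hconj := conjugate_conjugate (pairwise_durfeeArm hL)
    (h := (m + L.durfeeLeg.length).toNat) fun x hx => le_of_mem_durfeeArm hpos (by omega) hx
  rw [length_durfeeArm] at hconj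
  have htop : ((L.durfeeArm.conjugate (m + L.durfeeLeg.length).toNat).map (2 * · + 1)).map (· / 2)
      = L.durfeeArm.conjugate (m + L.durfeeLeg.length).toNat :=
    map_map_eq_self fun _ _ => by omega
  have hbot : (L.durfeeLeg.map (2 * · - 1)).map (· / 2 + 1) = L.durfeeLeg :=
    map_map_eq_self fun x hx => by have := hpos x (mem_of_mem_drop hx); omega
  simp only [parts, ofParts]
  rw [htop, hconj, map_durfeeArm_add, hbot, durfeeLeg, take_append_drop]

theorem ofParts_parts {m : ℤ} (σ : OddDurfeeSymbol n) (hσ : oddRank σ = m)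
    {hn : (n : ℤ) = 2 * σ.parts.sum + m + 1} {hn1 : 1 ≤ n} {hle : (n : ℤ) ≤ 3 * m + 5} :
    ofParts m σ.parts σ.pairwise_parts σ.pos_of_mem_parts hn hn1 hle = σ := by
  have hconj := conjugate_conjugate (h := σ.D)
    (σ.top_sorted.map _ fun _ _ h => Nat.div_le_div_right h) σ.le_of_mem_map_top
  have hwidth : (m + (σ.bot.map (· / 2 + 1)).length).toNat = (σ.top.map (· / 2)).length := by
    simp only [length_map]
    unfold oddRank at hσ
    omega
  refine ext (durfeeRect_parts σ) ?_ ?_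
  · simp only [ofParts]
    rw [durfeeArm_parts, durfeeLeg_parts, hwidth, hconj, map_two_mul_add_one_map_div_two σ.top_odd]
  · simp only [ofParts]
    rw [durfeeLeg_parts, map_two_mul_sub_one_map_div_two_add_one σ.bot_odd]

def equivSortedList {m : ℤ} {N : ℕ} (hn : (n : ℤ) = 2 * N + m + 1) (hn1 : 1 ≤ n)
    (hle : (n : ℤ) ≤ 3 * m + 5) :
    {σ : OddDurfeeSymbol n // oddRank σ = m} ≃
      {L : List ℕ // L.Pairwise (· ≥ ·) ∧ (∀ x ∈ L, 0 < x) ∧ L.sum = N} where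
  toFun σ := ⟨σ.1.parts, σ.1.pairwise_parts, σ.1.pos_of_mem_parts, by
    have := σ.1.two_mul_sum_parts
    rw [σ.2] at this
    omega⟩
  invFun L := ⟨ofParts m L.1 L.2.1 L.2.2.1 (by rw [L.2.2.2]; exact hn) hn1 hle,
    oddRank_ofParts⟩
  left_inv σ := Subtype.ext (by dsimp only; exact ofParts_parts σ.1 σ.2)
  right_inv L := Subtype.ext (by dsimp only; exact parts_ofParts)

end OddDurfeeSymbol

def Nat.Partition.equivSortedList (N : ℕ) :
    N.Partition ≃ {L : List ℕ // L.Pairwise (· ≥ ·) ∧ (∀ x ∈ L, 0 < x) ∧ L.sum = N} where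
  toFun p := ⟨p.parts.sort (· ≥ ·), Multiset.pairwise_sort _ _,
    fun _ hx => p.parts_pos ((Multiset.mem_sort _).1 hx),
    by rw [← Multiset.sum_coe, Multiset.sort_eq, p.parts_sum]⟩
  invFun L := ⟨L.1, fun hx => L.2.2.1 _ (Multiset.mem_coe.1 hx), by rw [Multiset.sum_coe, L.2.2.2]⟩
  left_inv p := Nat.Partition.ext (Multiset.sort_eq _ _)
  right_inv L := Subtype.ext ((Multiset.coe_sort _ _).trans (List.mergeSort_eq_self _ L.2.1))

/-- For integers `n ≥ 1` and `m` with `n ≤ 3m+5` and `n ≡ m+1 (mod 2)`,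
`N⁰(m,n) = p((n−m−1)/2)`. -/
theorem N0_eq_partitionCount (n : ℕ) (hn : 1 ≤ n) (m : ℤ)
    (hle : (n : ℤ) ≤ 3 * m + 5) (hpar : (n : ℤ) ≡ m + 1 [ZMOD 2]) :
    N0 m n = partitionCountZ (((n : ℤ) - m - 1) / 2) := by
  obtain ⟨N, hN⟩ : ∃ N : ℤ, ((n : ℤ) - m - 1) / 2 = N := ⟨_, rfl⟩
  have hnN : (n : ℤ) = 2 * N + m + 1 := by
    unfold Int.ModEq at hpar
    omega
  rw [N0, partitionCountZ, hN]
  split_ifs with hN0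
  · lift N to ℕ using hN0
    rw [Int.toNat_natCast]
    exact Nat.card_congr ((OddDurfeeSymbol.equivSortedList hnN hn hle).trans
      (Nat.Partition.equivSortedList N).symm)
  · have : IsEmpty {σ : OddDurfeeSymbol n // oddRank σ = m} :=
      ⟨fun σ => by have := OddDurfeeSymbol.oddRank_lt σ.1; omega⟩
    exact Nat.card_of_isEmpty
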